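/- arXiv:math/0701873 — 3 statements merged into one kernel-verified Lean document; each statement's English description precedes it below -/
import Mathlib

section
/- Let 0 < H₀ < 1, ω₁ > 0, and u, u' ≥ 0 with max(u,u')·ω₁ < 1. Then for every b > 0, |∫₀^{ω₁} sin(uξ) sin(u'ξ) sin(bξ) / ξ^{2H₀+2} dξ − u·u'·∫₀^{ω₁} sin(bξ)/ξ^{2H₀} dξ| ≤ (max(u,u'))⁴ · ω₁^{3−2H₀} / (1 − (max(u,u')·ω₁)²). -/
open MeasureTheory Real Set

/-!
Since |x - sin x| ≤ |x|³/6, we have sin(uξ) sin(u'ξ) = uu'ξ² + E(ξ) with |E(ξ)| ≤ M⁴ξ⁴/3,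
where M = max u u'. The difference of the two integrals is therefore the integral of
E(ξ) sin(bξ) / ξ^(2H₀+2), whose integrand is bounded by M⁴ξ^(2-2H₀)/3; integrating this
majorant gives M⁴ω₁^(3-2H₀) / (3(3-2H₀)), which is below the claimed bound.
-/

theorem abs_sin_mul_sin_sub_mul_le (x y : ℝ) :
    |sin x * sin y - x * y| ≤ (|x| ^ 3 * |y| + |x| * |y| ^ 3) / 6 := by
  calc |sin x * sin y - x * y| = |(sin x - x) * sin y + x * (sin y - y)| := by ring_nf
    _ ≤ |sin x - x| * |sin y| + |x| * |sin y - y| :=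
        (abs_add_le _ _).trans_eq (by rw [abs_mul, abs_mul])
    _ ≤ |x| ^ 3 / 6 * |y| + |x| * (|y| ^ 3 / 6) := by
        rw [abs_sub_comm (sin x), abs_sub_comm (sin y)]
        exact add_le_add
          (mul_le_mul (abs_sub_sin_le x) abs_sin_le_abs (abs_nonneg _) (by positivity))
          (mul_le_mul_of_nonneg_left (abs_sub_sin_le y) (abs_nonneg x))
    _ = (|x| ^ 3 * |y| + |x| * |y| ^ 3) / 6 := by ring

theorem abs_sin_mul_sin_sub_mul_le_of_abs_le {x y M : ℝ} (hx : |x| ≤ M) (hy : |y| ≤ M) :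
    |sin x * sin y - x * y| ≤ M ^ 4 / 3 := by
  have hM : 0 ≤ M := (abs_nonneg x).trans hx
  calc |sin x * sin y - x * y| ≤ (|x| ^ 3 * |y| + |x| * |y| ^ 3) / 6 :=
        abs_sin_mul_sin_sub_mul_le x y
    _ ≤ (M ^ 3 * M + M * M ^ 3) / 6 := by gcongr
    _ = M ^ 4 / 3 := by ring

theorem abs_sin_mul_sin_mul_sin_div_rpow_sub_le {ξ u u' M : ℝ} (hξ : 0 < ξ)
    (hu : |u| ≤ M) (hu' : |u'| ≤ M) (b s : ℝ) :
    |sin (u * ξ) * sin (u' * ξ) * sin (b * ξ) / ξ ^ (s + 2) - u * u' * (sin (b * ξ) / ξ ^ s)|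
      ≤ M ^ 4 / 3 * ξ ^ (2 - s) := by
  have hpow : ξ ^ (s + 2) = ξ ^ s * ξ ^ 2 := by exact_mod_cast rpow_add_natCast hξ.ne' s 2
  have hdiff :
      sin (u * ξ) * sin (u' * ξ) * sin (b * ξ) / ξ ^ (s + 2) - u * u' * (sin (b * ξ) / ξ ^ s)
        = (sin (u * ξ) * sin (u' * ξ) - (u * ξ) * (u' * ξ)) * sin (b * ξ) / (ξ ^ s * ξ ^ 2) := by
    rw [hpow]; field_simp
  have hprod := abs_sin_mul_sin_sub_mul_le_of_abs_le (x := u * ξ) (y := u' * ξ) (M := M * ξ)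
    (by rw [abs_mul, abs_of_pos hξ]; gcongr) (by rw [abs_mul, abs_of_pos hξ]; gcongr)
  rw [hdiff, abs_div, abs_mul, abs_of_pos (by positivity : 0 < ξ ^ s * ξ ^ 2), rpow_sub hξ,
    rpow_two]
  calc _ ≤ (M * ξ) ^ 4 / 3 * 1 / (ξ ^ s * ξ ^ 2) := by
        gcongr
        exact abs_sin_le_one _
    _ = M ^ 4 / 3 * (ξ ^ 2 / ξ ^ s) := by field_simp

theorem abs_sin_mul_div_rpow_le {ξ : ℝ} (hξ : 0 < ξ) (b s : ℝ) :
    |sin (b * ξ) / ξ ^ s| ≤ |b| * ξ ^ (1 - s) := by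
  rw [abs_div, abs_of_pos (rpow_pos_of_pos hξ s), rpow_sub hξ, rpow_one, mul_div_assoc']
  gcongr
  simpa [abs_mul, abs_of_pos hξ] using abs_sin_le_abs (x := b * ξ)

section RpowMajorant

variable {f : ℝ → ℝ} {ω C r : ℝ}

theorem intervalIntegrable_of_abs_le_mul_rpow (hr : -1 < r) (hω : 0 ≤ ω)
    (hf : AEStronglyMeasurable f (volume.restrict (Ioc 0 ω)))
    (hbound : ∀ ξ ∈ Ioc 0 ω, |f ξ| ≤ C * ξ ^ r) :
    IntervalIntegrable f volume 0 ω := by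
  rw [← uIoc_of_le hω] at hf hbound
  exact ((intervalIntegral.intervalIntegrable_rpow' hr).const_mul C).mono_fun' hf
    ((ae_restrict_mem measurableSet_uIoc).mono hbound)

theorem abs_intervalIntegral_le_of_abs_le_mul_rpow (hr : -1 < r) (hω : 0 ≤ ω)
    (hbound : ∀ ξ ∈ Ioc 0 ω, |f ξ| ≤ C * ξ ^ r) :
    |∫ ξ in (0:ℝ)..ω, f ξ| ≤ C * (ω ^ (r + 1) / (r + 1)) := by
  have hr' : r + 1 ≠ 0 := by linarith
  calc |∫ ξ in (0:ℝ)..ω, f ξ| ≤ ∫ ξ in (0:ℝ)..ω, C * ξ ^ r :=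
        intervalIntegral.norm_integral_le_of_norm_le (f := f) hω (ae_of_all _ hbound)
          ((intervalIntegral.intervalIntegrable_rpow' hr).const_mul C)
    _ = C * (ω ^ (r + 1) / (r + 1)) := by
        rw [intervalIntegral.integral_const_mul, integral_rpow (Or.inl hr), zero_rpow hr', sub_zero]

end RpowMajorant

theorem low_frequency_sin_integral_bound_general (H₀ ω₁ u u' : ℝ)
    (hH1 : H₀ < 1) (hω : 0 < ω₁)
    (hu : 0 ≤ u) (hu' : 0 ≤ u') (hsmall : max u u' * ω₁ < 1) :
    ∀ b : ℝ, 0 < b →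
      |(∫ ξ in (0:ℝ)..ω₁,
          Real.sin (u * ξ) * Real.sin (u' * ξ) * Real.sin (b * ξ) / ξ ^ (2 * H₀ + 2))
        - u * u' * ∫ ξ in (0:ℝ)..ω₁, Real.sin (b * ξ) / ξ ^ (2 * H₀)|
      ≤ (max u u') ^ 4 * ω₁ ^ (3 - 2 * H₀) / (1 - (max u u' * ω₁) ^ 2) := by
  intro b _
  set M := max u u'
  have hM : 0 ≤ M := hu.trans (le_max_left u u')
  have hdiff : ∀ ξ ∈ Ioc 0 ω₁,
      |sin (u * ξ) * sin (u' * ξ) * sin (b * ξ) / ξ ^ (2 * H₀ + 2)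
        - u * u' * (sin (b * ξ) / ξ ^ (2 * H₀))| ≤ M ^ 4 / 3 * ξ ^ (2 - 2 * H₀) :=
    fun ξ hξ => abs_sin_mul_sin_mul_sin_div_rpow_sub_le hξ.1
      ((abs_of_nonneg hu).trans_le (le_max_left u u'))
      ((abs_of_nonneg hu').trans_le (le_max_right u u')) b (2 * H₀)
  have hG : IntervalIntegrable (fun ξ => sin (b * ξ) / ξ ^ (2 * H₀)) volume 0 ω₁ :=
    intervalIntegrable_of_abs_le_mul_rpow (by linarith) hω.le
      (by fun_prop : Measurable _).aestronglyMeasurable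
      fun ξ hξ => abs_sin_mul_div_rpow_le hξ.1 b (2 * H₀)
  have hD := intervalIntegrable_of_abs_le_mul_rpow (by linarith) hω.le
    (by fun_prop : Measurable _).aestronglyMeasurable hdiff
  have hF := hD.add (hG.const_mul (u * u'))
  simp only [sub_add_cancel] at hF
  rw [← intervalIntegral.integral_const_mul, ← intervalIntegral.integral_sub hF (hG.const_mul _)]
  have hden : 0 < 1 - (M * ω₁) ^ 2 := by nlinarith [mul_nonneg hM hω.le]
  calc _ ≤ M ^ 4 / 3 * (ω₁ ^ (2 - 2 * H₀ + 1) / (2 - 2 * H₀ + 1)) :=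
        abs_intervalIntegral_le_of_abs_le_mul_rpow (by linarith) hω.le hdiff
    _ ≤ M ^ 4 * ω₁ ^ (3 - 2 * H₀) := by
        rw [show 2 - 2 * H₀ + 1 = 3 - 2 * H₀ by ring, mul_comm_div, div_div]
        gcongr M ^ 4 * ?_
        exact div_le_self (by positivity) (by linarith)
    _ ≤ M ^ 4 * ω₁ ^ (3 - 2 * H₀) / (1 - (M * ω₁) ^ 2) :=
        le_div_self (by positivity) hden (by nlinarith [sq_nonneg (M * ω₁)])

theorem low_frequency_sin_integral_bound (H₀ ω₁ u u' : ℝ)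
    (hH0 : 0 < H₀) (hH1 : H₀ < 1) (hω : 0 < ω₁)
    (hu : 0 ≤ u) (hu' : 0 ≤ u') (hsmall : max u u' * ω₁ < 1) :
    ∀ b : ℝ, 0 < b →
      |(∫ ξ in (0:ℝ)..ω₁,
          Real.sin (u * ξ) * Real.sin (u' * ξ) * Real.sin (b * ξ) / ξ ^ (2 * H₀ + 2))
        - u * u' * ∫ ξ in (0:ℝ)..ω₁, Real.sin (b * ξ) / ξ ^ (2 * H₀)|
      ≤ (max u u') ^ 4 * ω₁ ^ (3 - 2 * H₀) / (1 - (max u u' * ω₁) ^ 2) :=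
  low_frequency_sin_integral_bound_general H₀ ω₁ u u' hH1 hω hu hu' hsmall
end

section
/- Let 0 < H < 1, 0 < ω_i < ω_{i+1} < ∞, and u, u', b > 0. Then |∫_{ω_i}^{ω_{i+1}} sin(uξ) sin(u'ξ) cos(bξ) / ξ^{2H+1} dξ| ≤ C · u·u'/b, where C > 0 depends only on H, ω_i, ω_{i+1}. -/
/-! Write the integrand as `F ξ * cos (b ξ)` with `F ξ = sin (u ξ) sin (u' ξ) ξ^(-(2H+1))` and
integrate by parts once against `sin (b ξ) / b`. Since `|sin (u ξ)| ≤ u |ξ|`, both `F` and `F'`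
are `O(u u')` on the compact band, so the boundary terms and the remaining integral are
`O(u u' / b)`. -/

open MeasureTheory Real Set

theorem abs_integral_mul_cos_le {f f' : ℝ → ℝ} {a c β M M' : ℝ} (hβ : 0 < β)
    (hf : ∀ x ∈ uIcc a c, HasDerivAt f (f' x) x) (hf' : IntervalIntegrable f' volume a c)
    (hM : ∀ x ∈ uIcc a c, |f x| ≤ M) (hM' : ∀ x ∈ uIcc a c, |f' x| ≤ M') :
    |∫ x in a..c, f x * cos (β * x)| ≤ (2 * M + |c - a| * M') / β := by
  have hsin : ∀ x, HasDerivAt (fun x => sin (β * x) / β) (cos (β * x)) x := fun x => by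
    simpa [hβ.ne'] using (((hasDerivAt_id x).const_mul β).sin).div_const β
  have hcos : IntervalIntegrable (fun x => cos (β * x)) volume a c :=
    (continuous_cos.comp (continuous_const.mul continuous_id)).intervalIntegrable a c
  have hterm : ∀ {y K : ℝ} (t : ℝ), |y| ≤ K → |y * (sin t / β)| ≤ K / β := fun t hy => by
    rw [abs_mul, abs_div, abs_of_pos hβ, mul_div_assoc']
    gcongr
    exact (mul_le_of_le_one_right (abs_nonneg _) (abs_sin_le_one t)).trans hy
  have hrest : |∫ x in a..c, f' x * (sin (β * x) / β)| ≤ M' / β * |c - a| :=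
    intervalIntegral.norm_integral_le_of_norm_le_const (f := fun x => f' x * (sin (β * x) / β))
      fun x hx => hterm _ (hM' x (uIoc_subset_uIcc hx))
  rw [intervalIntegral.integral_mul_deriv_eq_deriv_mul hf (fun x _ => hsin x) hf' hcos]
  calc _ ≤ |f c * (sin (β * c) / β)| + |f a * (sin (β * a) / β)|
          + |∫ x in a..c, f' x * (sin (β * x) / β)| := by
        refine (abs_sub _ _).trans (add_le_add_left (abs_sub _ _) _)
    _ ≤ M / β + M / β + M' / β * |c - a| := by
        gcongr
        exacts [hterm _ (hM c right_mem_uIcc), hterm _ (hM a left_mem_uIcc)]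
    _ = _ := by ring

theorem abs_sin_mul_le {u x R : ℝ} (hu : 0 ≤ u) (hx : |x| ≤ R) : |sin (u * x)| ≤ u * R :=
  calc |sin (u * x)| ≤ |u * x| := abs_sin_le_abs
    _ = u * |x| := by rw [abs_mul, abs_of_nonneg hu]
    _ ≤ u * R := by gcongr

theorem hasDerivAt_sin_mul_sin_mul {g : ℝ → ℝ} {g' x : ℝ} (u u' : ℝ) (hg : HasDerivAt g g' x) :
    HasDerivAt (fun x => sin (u * x) * sin (u' * x) * g x)
      (u * cos (u * x) * sin (u' * x) * g x + u' * sin (u * x) * cos (u' * x) * g x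
        + sin (u * x) * sin (u' * x) * g') x := by
  have hsin : ∀ v, HasDerivAt (fun x => sin (v * x)) (v * cos (v * x)) x := fun v => by
    simpa [mul_comm] using ((hasDerivAt_id x).const_mul v).sin
  exact (((hsin u).fun_mul (hsin u')).fun_mul hg).congr_deriv (by ring)

theorem exists_abs_integral_sin_mul_sin_mul_cos_le {g g' : ℝ → ℝ} {a c : ℝ}
    (hg : ∀ x ∈ uIcc a c, HasDerivAt g (g' x) x) (hg' : ContinuousOn g' (uIcc a c)) :
    ∃ C, 0 < C ∧ ∀ u u' β : ℝ, 0 < u → 0 < u' → 0 < β →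
      |∫ x in a..c, sin (u * x) * sin (u' * x) * g x * cos (β * x)| ≤ C * (u * u') / β := by
  obtain ⟨R, hR⟩ : ∃ R, ∀ x ∈ uIcc a c, |x| ≤ R :=
    isCompact_uIcc.exists_bound_of_continuousOn continuousOn_id
  obtain ⟨G, hG⟩ : ∃ G, ∀ x ∈ uIcc a c, |g x| ≤ G :=
    isCompact_uIcc.exists_bound_of_continuousOn fun x hx => (hg x hx).continuousAt.continuousWithinAt
  obtain ⟨G', hG'⟩ : ∃ G', ∀ x ∈ uIcc a c, |g' x| ≤ G' :=
    isCompact_uIcc.exists_bound_of_continuousOn hg'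
  have hR0 : 0 ≤ R := (abs_nonneg a).trans (hR a left_mem_uIcc)
  have hG0 : 0 ≤ G := (abs_nonneg _).trans (hG a left_mem_uIcc)
  set K := 2 * (R ^ 2 * G) + |c - a| * (2 * R * G + R ^ 2 * G')
  have hG'0 : 0 ≤ G' := (abs_nonneg _).trans (hG' a left_mem_uIcc)
  have hK : 0 ≤ K := by positivity
  refine ⟨K + 1, by positivity, fun u u' β hu hu' hβ => ?_⟩
  have hF : ∀ x ∈ uIcc a c, |sin (u * x) * sin (u' * x) * g x| ≤ u * u' * (R ^ 2 * G) :=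
    fun x hx => by
      simp only [abs_mul]
      calc _ ≤ u * R * (u' * R) * G := by
            gcongr
            exacts [abs_sin_mul_le hu.le (hR x hx), abs_sin_mul_le hu'.le (hR x hx), hG x hx]
        _ = _ := by ring
  have hF' : ∀ x ∈ uIcc a c, |u * cos (u * x) * sin (u' * x) * g x
      + u' * sin (u * x) * cos (u' * x) * g x + sin (u * x) * sin (u' * x) * g' x|
        ≤ u * u' * (2 * R * G + R ^ 2 * G') := fun x hx => by
    have hsu := abs_sin_mul_le hu.le (hR x hx)
    have hsu' := abs_sin_mul_le hu'.le (hR x hx)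
    have h₁ : |u * cos (u * x) * sin (u' * x) * g x| ≤ u * 1 * (u' * R) * G := by
      simp only [abs_mul, abs_of_pos hu]
      gcongr
      exacts [abs_cos_le_one _, hG x hx]
    have h₂ : |u' * sin (u * x) * cos (u' * x) * g x| ≤ u' * (u * R) * 1 * G := by
      simp only [abs_mul, abs_of_pos hu']
      gcongr
      exacts [abs_cos_le_one _, hG x hx]
    have h₃ : |sin (u * x) * sin (u' * x) * g' x| ≤ u * R * (u' * R) * G' := by
      simp only [abs_mul]
      gcongr
      exact hG' x hx
    calc _ ≤ _ := abs_add_three _ _ _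
      _ ≤ _ := add_le_add_three h₁ h₂ h₃
      _ = _ := by ring
  have hcont : ContinuousOn (fun x => u * cos (u * x) * sin (u' * x) * g x
      + u' * sin (u * x) * cos (u' * x) * g x + sin (u * x) * sin (u' * x) * g' x) (uIcc a c) := by
    have hgc : ContinuousOn g (uIcc a c) := fun x hx => (hg x hx).continuousAt.continuousWithinAt
    fun_prop
  calc _ ≤ (2 * (u * u' * (R ^ 2 * G)) + |c - a| * (u * u' * (2 * R * G + R ^ 2 * G'))) / β :=
        abs_integral_mul_cos_le hβ (fun x hx => hasDerivAt_sin_mul_sin_mul u u' (hg x hx))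
          hcont.intervalIntegrable hF hF'
    _ = K * (u * u') / β := by ring
    _ ≤ (K + 1) * (u * u') / β := by gcongr; linarith

theorem middle_band_integral_bound_general (H ωi ωip1 : ℝ)
    (h0 : 0 < ωi) (hlt : ωi < ωip1) :
    ∃ C : ℝ, 0 < C ∧ ∀ u u' b : ℝ, 0 < u → 0 < u' → 0 < b →
      |∫ ξ in ωi..ωip1,
          Real.sin (u * ξ) * Real.sin (u' * ξ) * Real.cos (b * ξ) / ξ ^ (2 * H + 1)|
        ≤ C * (u * u') / b := by
  set q := 2 * H + 1
  have hpos : ∀ ξ ∈ uIcc ωi ωip1, 0 < ξ := fun ξ hξ =>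
    h0.trans_le (uIcc_of_le hlt.le ▸ hξ).1
  obtain ⟨C, hC, hbound⟩ := exists_abs_integral_sin_mul_sin_mul_cos_le
    (g := fun ξ => ξ ^ (-q)) (g' := fun ξ => -q * ξ ^ (-q - 1))
    (fun ξ hξ => hasDerivAt_rpow_const (Or.inl (hpos ξ hξ).ne'))
    (continuousOn_const.mul (continuousOn_id.rpow_const fun ξ hξ => Or.inl (hpos ξ hξ).ne'))
  refine ⟨C, hC, fun u u' b hu hu' hb => ?_⟩
  convert hbound u u' b hu hu' hb using 2
  refine intervalIntegral.integral_congr fun ξ hξ => ?_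
  simp only [rpow_neg (hpos ξ hξ).le]
  ring

theorem middle_band_integral_bound (H ωi ωip1 : ℝ)
    (hH0 : 0 < H) (hH1 : H < 1) (h0 : 0 < ωi) (hlt : ωi < ωip1) :
    ∃ C : ℝ, 0 < C ∧ ∀ u u' b : ℝ, 0 < u → 0 < u' → 0 < b →
      |∫ ξ in ωi..ωip1,
          Real.sin (u * ξ) * Real.sin (u' * ξ) * Real.cos (b * ξ) / ξ ^ (2 * H + 1)|
        ≤ C * (u * u') / b :=
  middle_band_integral_bound_general H ωi ωip1 h0 hlt
end

section
/- Suppose the function x ↦ I(x) = 2(σ₁² x^{2H₁+1} ∫_α^{xω} |φ(u)|²/u^{2H₁+1} du + σ₂² x^{2H₂+1} ∫_{xω}^β |φ(u)|²/u^{2H₂+1} du) coincides with a₁ x^{b₁} on an interval [α/ω, α/ω + η'] with η' > 0, where φ is continuous, φ(α) = 0, φ not identically 0 on any subinterval of (α,β), ω > 0, σ₁, σ₂ > 0, H₁, H₂ ∈ (0,1). Then σ₁² = σ₂² and H₁ = H₂. -/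
/-!
At `x₀ = α / ω` the first integral is empty and `φ α = 0`, so the value and the derivative of `I`
at `x₀` see only the term `2 σ₂² C x^q`, where `q = 2 H₂ + 1` and `C = ∫_α^β φ(t)²/t^q dt > 0`.
Matching them with `a₁ x^b₁` forces `b₁ = q` and `a₁ = 2 σ₂² C`, hence, with `p = 2 H₁ + 1`,
`u(x) = σ₁² x^p ∫_α^{xω} φ(t)²/t^p dt` and `v(x) = σ₂² x^q ∫_α^{xω} φ(t)²/t^q dt` agree near `x₀`.
Both solve Euler-type equations `w' = c w / x + σ² ω^(1-c) φ(xω)²`, with `c = p` resp. `c = q`;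
comparing them, either the coefficients of `φ(xω)²` differ, and then `v` solves `v' = m v / x`
with `v(x₀) = 0`, forcing `v ≡ 0` against `φ ≢ 0`, or they agree, and then `p = q`
and `σ₁² = σ₂²`.
-/

open MeasureTheory Real Set

noncomputable def scaledPrimitive (g : ℝ → ℝ) (α ω c x : ℝ) : ℝ :=
  x ^ c * ∫ u in α..x * ω, g u / u ^ c

section ScaledPrimitive

variable {g : ℝ → ℝ} {α ω c x : ℝ}

theorem continuousOn_div_rpow (hg : Continuous g) : ContinuousOn (fun u => g u / u ^ c) (Ioi 0) :=
  fun u hu => (hg.continuousAt.div (continuousAt_rpow_const u c (Or.inl (ne_of_gt hu)))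
    (rpow_pos_of_pos hu c).ne').continuousWithinAt

theorem intervalIntegrable_div_rpow (hg : Continuous g) {a b : ℝ} (ha : 0 < a) (hb : 0 < b) :
    IntervalIntegrable (fun u => g u / u ^ c) volume a b :=
  ((continuousOn_div_rpow hg).mono fun _ hu => (lt_min ha hb).trans_le hu.1).intervalIntegrable

theorem integral_div_rpow_pos (hg : Continuous g) (hg0 : ∀ u, 0 ≤ g u) (hα : 0 < α) {t : ℝ}
    (hne : ∃ y ∈ Ioo α t, g y ≠ 0) : 0 < ∫ u in α..t, g u / u ^ c := by
  obtain ⟨y, hy, hgy⟩ := hne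
  refine intervalIntegral.integral_pos (hy.1.trans hy.2)
    ((continuousOn_div_rpow hg).mono fun _ hu => hα.trans_le hu.1)
    (fun u hu => div_nonneg (hg0 u) (rpow_nonneg (hα.trans hu.1).le c))
    ⟨y, Ioo_subset_Icc_self hy,
      div_pos ((hg0 y).lt_of_ne' hgy) (rpow_pos_of_pos (hα.trans hy.1) c)⟩

theorem scaledPrimitive_pos (hg : Continuous g) (hg0 : ∀ u, 0 ≤ g u) (hα : 0 < α) (hx : 0 < x)
    (hne : ∃ y ∈ Ioo α (x * ω), g y ≠ 0) : 0 < scaledPrimitive g α ω c x :=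
  mul_pos (rpow_pos_of_pos hx c) (integral_div_rpow_pos hg hg0 hα hne)

theorem scaledPrimitive_div_self (hω : ω ≠ 0) : scaledPrimitive g α ω c (α / ω) = 0 := by
  simp [scaledPrimitive, div_mul_cancel₀ α hω]

theorem hasDerivAt_scaledPrimitive (hg : Continuous g) (hα : 0 < α) (hω : 0 < ω) (hx : 0 < x) :
    HasDerivAt (scaledPrimitive g α ω c)
      (c * scaledPrimitive g α ω c x / x + ω / ω ^ c * g (x * ω)) x := by
  have hxω : 0 < x * ω := mul_pos hx hω
  have hF : HasDerivAt (fun y => ∫ u in α..y, g u / u ^ c) (g (x * ω) / (x * ω) ^ c) (x * ω) :=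
    intervalIntegral.integral_hasDerivAt_right (intervalIntegrable_div_rpow hg hα hxω)
      ((continuousOn_div_rpow hg).stronglyMeasurableAtFilter isOpen_Ioi _ hxω)
      ((continuousOn_div_rpow hg).continuousAt (Ioi_mem_nhds hxω))
  refine ((hasDerivAt_rpow_const (p := c) (Or.inl hx.ne')).mul
    (hF.comp x (hasDerivAt_mul_const ω))).congr_deriv ?_
  simp only [scaledPrimitive, Function.comp_def, mul_rpow hx.le hω.le, rpow_sub_one hx.ne']
  field_simp

theorem rpow_mul_integral_eq_sub_scaledPrimitive (hg : Continuous g) (hα : 0 < α) {β : ℝ}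
    (hβ : 0 < β) (hxω : 0 < x * ω) :
    x ^ c * ∫ u in x * ω..β, g u / u ^ c
      = x ^ c * (∫ u in α..β, g u / u ^ c) - scaledPrimitive g α ω c x := by
  rw [scaledPrimitive, ← mul_sub, intervalIntegral.integral_interval_sub_left
    (intervalIntegrable_div_rpow hg hα hβ) (intervalIntegrable_div_rpow hg hα hxω)]

theorem hasDerivAt_const_mul_scaledPrimitive (hg : Continuous g) (hα : 0 < α) (hω : 0 < ω)
    (hx : 0 < x) (σ : ℝ) :
    HasDerivAt (fun y => σ * scaledPrimitive g α ω c y)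
      (c * (σ * scaledPrimitive g α ω c x) / x + σ * ω / ω ^ c * g (x * ω)) x :=
  ((hasDerivAt_scaledPrimitive hg hα hω hx).const_mul σ).congr_deriv (by ring)

theorem two_mul_add_integral_eq (hg : Continuous g) (hα : 0 < α) {β : ℝ} (hβ : 0 < β)
    (hxω : 0 < x * ω) (σ₁ σ₂ p q : ℝ) :
    2 * (σ₁ * x ^ p * (∫ u in α..x * ω, g u / u ^ p) + σ₂ * x ^ q * ∫ u in x * ω..β, g u / u ^ q)
      = 2 * σ₂ * (∫ u in α..β, g u / u ^ q) * x ^ q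
        + 2 * (σ₁ * scaledPrimitive g α ω p x - σ₂ * scaledPrimitive g α ω q x) := by
  have := rpow_mul_integral_eq_sub_scaledPrimitive (c := q) hg hα hβ hxω
  simp only [scaledPrimitive] at this ⊢
  linear_combination 2 * σ₂ * this

end ScaledPrimitive

theorem eq_zero_of_hasDerivAt_mul_div {v : ℝ → ℝ} {a b m : ℝ} (ha : 0 < a) (hab : a ≤ b)
    (hvc : ContinuousOn v (Icc a b)) (hv : ∀ x ∈ Ioo a b, HasDerivAt v (m * v x / x) x)
    (hva : v a = 0) : v b = 0 := by
  rcases hab.eq_or_lt with rfl | hab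
  · exact hva
  have hpos : ∀ x ∈ Icc a b, 0 < x := fun x hx => ha.trans_le hx.1
  have hW : ∀ x ∈ Ioo a b, HasDerivAt (fun y => v y * y ^ (-m)) 0 x := by
    intro x hx
    have hx0 := hpos x (Ioo_subset_Icc_self hx)
    refine ((hv x hx).mul (hasDerivAt_rpow_const (p := -m) (Or.inl hx0.ne'))).congr_deriv ?_
    rw [rpow_sub_one hx0.ne']
    field_simp
    ring
  obtain ⟨c, -, hc⟩ := exists_hasDerivAt_eq_slope (fun y => v y * y ^ (-m)) (fun _ => 0) hab
    (hvc.mul fun x hx =>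
      (continuousAt_rpow_const x (-m) (Or.inl (hpos x hx).ne')).continuousWithinAt) hW
  rw [eq_comm, div_eq_zero_iff, sub_eq_zero, hva, zero_mul] at hc
  have hb := (rpow_pos_of_pos (ha.trans hab) (-m)).ne'
  simpa [hb, (sub_pos.2 hab).ne'] using hc

theorem eq_of_mul_rpow_eq_mul_rpow_add {f : ℝ → ℝ} {a b A B r s : ℝ} (ha : 0 < a) (hab : a < b)
    (hB : B ≠ 0) (h : ∀ x ∈ Icc a b, A * x ^ r = B * x ^ s + f x) (hfa : f a = 0)
    (hf : HasDerivAt f 0 a) : A = B ∧ r = s := by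
  have hmem : a ∈ Icc a b := left_mem_Icc.2 hab.le
  have hval : A * a ^ r = B * a ^ s := by simpa [hfa] using h a hmem
  have hder : A * (r * a ^ (r - 1)) = B * (s * a ^ (s - 1)) + 0 :=
    ((uniqueDiffOn_Icc hab) a hmem).eq_deriv _
      ((hasDerivAt_rpow_const (Or.inl ha.ne')).const_mul A).hasDerivWithinAt
      ((((hasDerivAt_rpow_const (Or.inl ha.ne')).const_mul B).add hf).hasDerivWithinAt.congr_of_mem
        h hmem)
  have hBs : B * a ^ s ≠ 0 := mul_ne_zero hB (rpow_pos_of_pos ha s).ne'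
  have hrs : r = s := by
    rw [rpow_sub_one ha.ne', rpow_sub_one ha.ne', add_zero] at hder
    apply mul_right_cancel₀ hBs
    field_simp at hder
    linear_combination hder - r * hval
  subst hrs
  exact ⟨mul_right_cancel₀ (rpow_pos_of_pos ha r).ne' hval, rfl⟩

theorem eq_and_eq_of_hasDerivAt_mul_div_add {u v h : ℝ → ℝ} {a b p q k₁ k₂ : ℝ} (ha : 0 < a)
    (huv : EqOn u v (Ioo a b)) (hvc : ContinuousOn v (Icc a b)) (hva : v a = 0)
    (hv0 : ∃ x ∈ Ioo a b, v x ≠ 0)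
    (hu : ∀ x ∈ Ioo a b, HasDerivAt u (p * u x / x + k₁ * h x) x)
    (hv : ∀ x ∈ Ioo a b, HasDerivAt v (q * v x / x + k₂ * h x) x) : p = q ∧ k₁ = k₂ := by
  have key : ∀ x ∈ Ioo a b, (p - q) * v x / x = (k₂ - k₁) * h x := by
    intro x hx
    have := ((hu x hx).congr_of_eventuallyEq
      (huv.symm.eventuallyEq_of_mem (isOpen_Ioo.mem_nhds hx))).unique (hv x hx)
    rw [huv hx] at this
    linear_combination this
  obtain ⟨c, hc, hvc0⟩ := hv0
  -- Eliminating `h` turns the equation for `v` into `v' = m v / x`, whose only solution vanishing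
  -- at `a` is zero.
  have hk : k₁ = k₂ := by
    by_contra hk
    have hk' : k₂ - k₁ ≠ 0 := sub_ne_zero.2 (Ne.symm hk)
    refine hvc0 (eq_zero_of_hasDerivAt_mul_div (m := q + k₂ * (p - q) / (k₂ - k₁)) ha hc.1.le
      (hvc.mono (Icc_subset_Icc_right hc.2.le)) (fun x hx => ?_) hva)
    have hx : x ∈ Ioo a b := ⟨hx.1, hx.2.trans hc.2⟩
    convert hv x hx using 1
    rw [show h x = (p - q) * v x / x / (k₂ - k₁) by rw [key x hx]; field_simp]
    field_simp
  refine ⟨?_, hk⟩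
  have := key c hc
  rw [hk, sub_self, zero_mul, div_eq_zero_iff, mul_eq_zero, sub_eq_zero] at this
  exact (this.resolve_right (ha.trans hc.1).ne').resolve_right hvc0

theorem power_law_identifiability_general
    (α β ω η' σ₁ σ₂ H₁ H₂ a₁ b₁ : ℝ)
    (hα : 0 < α) (hαβ : α < β) (hω : 0 < ω) (hη : 0 < η')
    (hσ₂ : 0 < σ₂)
    (hsub : (α / ω + η') * ω ≤ β)
    (φ : ℝ → ℝ) (hφcont : Continuous φ) (hφα : φ α = 0)
    (hφne : ∀ s t : ℝ, α ≤ s → s < t → t ≤ β → ∃ x ∈ Set.Ioo s t, φ x ≠ 0)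
    (hI : ∀ x ∈ Set.Icc (α / ω) (α / ω + η'),
      2 * (σ₁ ^ 2 * x ^ (2 * H₁ + 1)
              * (∫ u in α..(x * ω), (φ u) ^ 2 / u ^ (2 * H₁ + 1))
            + σ₂ ^ 2 * x ^ (2 * H₂ + 1)
              * (∫ u in (x * ω)..β, (φ u) ^ 2 / u ^ (2 * H₂ + 1)))
        = a₁ * x ^ b₁) :
    σ₁ ^ 2 = σ₂ ^ 2 ∧ H₁ = H₂ := by
  set g : ℝ → ℝ := fun u => φ u ^ 2
  have hg : Continuous g := hφcont.pow 2
  have hne : ∀ t, α < t → t ≤ β → ∃ y ∈ Ioo α t, g y ≠ 0 := fun t ht htβ =>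
    (hφne α t le_rfl ht htβ).imp fun y hy => ⟨hy.1, pow_ne_zero 2 hy.2⟩
  set x₀ := α / ω
  have hx₀ : 0 < x₀ := div_pos hα hω
  have hS₀ : ∀ c, scaledPrimitive g α ω c x₀ = 0 := fun _ => scaledPrimitive_div_self hω.ne'
  set u := fun x => σ₁ ^ 2 * scaledPrimitive g α ω (2 * H₁ + 1) x
  set v := fun x => σ₂ ^ 2 * scaledPrimitive g α ω (2 * H₂ + 1) x
  have hu x (hx : 0 < x) :=
    hasDerivAt_const_mul_scaledPrimitive (c := 2 * H₁ + 1) hg hα hω hx (σ₁ ^ 2)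
  have hv x (hx : 0 < x) :=
    hasDerivAt_const_mul_scaledPrimitive (c := 2 * H₂ + 1) hg hα hω hx (σ₂ ^ 2)
  have hC :=
    integral_div_rpow_pos (c := 2 * H₂ + 1) hg (fun _ => sq_nonneg _) hα (hne β hαβ le_rfl)
  have hsplit x (hx : x ∈ Icc x₀ (x₀ + η')) := (hI x hx).symm.trans
    (two_mul_add_integral_eq hg hα (hα.trans hαβ) (mul_pos (hx₀.trans_le hx.1) hω) _ _ _ _)
  obtain ⟨ha₁, hb₁⟩ := eq_of_mul_rpow_eq_mul_rpow_add hx₀ (by linarith) (by positivity) hsplit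
    (by simp [hS₀]) (((hu x₀ hx₀).sub (hv x₀ hx₀)).const_mul 2 |>.congr_deriv
      (by simp [g, hS₀, x₀, hω.ne', hφα]))
  have huv : EqOn u v (Icc x₀ (x₀ + η')) := fun x hx => by
    have := hsplit x hx
    rw [ha₁, hb₁] at this
    linarith
  have hmid : v (x₀ + η' / 2) ≠ 0 := by
    have h1 : α < (x₀ + η' / 2) * ω := by nlinarith [div_mul_cancel₀ α hω.ne']
    have h2 : (x₀ + η' / 2) * ω ≤ β := by nlinarith
    exact (mul_pos (pow_pos hσ₂ 2) (scaledPrimitive_pos hg (fun _ => sq_nonneg _) hα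
      (by linarith) (hne _ h1 h2))).ne'
  obtain ⟨hpq, hk⟩ := eq_and_eq_of_hasDerivAt_mul_div_add hx₀ (huv.mono Ioo_subset_Icc_self)
    (HasDerivAt.continuousOn fun x hx => hv x (hx₀.trans_le hx.1)) (by simp [v, hS₀])
    ⟨x₀ + η' / 2, ⟨by linarith, by linarith⟩, hmid⟩
    (fun x hx => hu x (hx₀.trans hx.1)) (fun x hx => hv x (hx₀.trans hx.1))
  rw [hpq] at hk
  field_simp at hk
  exact ⟨hk, by linarith⟩

theorem power_law_identifiability
    (α β ω η' σ₁ σ₂ H₁ H₂ a₁ b₁ : ℝ)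
    (hα : 0 < α) (hαβ : α < β) (hω : 0 < ω) (hη : 0 < η')
    (hσ₁ : 0 < σ₁) (hσ₂ : 0 < σ₂)
    (hH₁ : H₁ ∈ Set.Ioo (0:ℝ) 1) (hH₂ : H₂ ∈ Set.Ioo (0:ℝ) 1)
    (hsub : (α / ω + η') * ω ≤ β)
    (φ : ℝ → ℝ) (hφcont : Continuous φ) (hφα : φ α = 0)
    (hφne : ∀ s t : ℝ, α ≤ s → s < t → t ≤ β → ∃ x ∈ Set.Ioo s t, φ x ≠ 0)
    (hI : ∀ x ∈ Set.Icc (α / ω) (α / ω + η'),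
      2 * (σ₁ ^ 2 * x ^ (2 * H₁ + 1)
              * (∫ u in α..(x * ω), (φ u) ^ 2 / u ^ (2 * H₁ + 1))
            + σ₂ ^ 2 * x ^ (2 * H₂ + 1)
              * (∫ u in (x * ω)..β, (φ u) ^ 2 / u ^ (2 * H₂ + 1)))
        = a₁ * x ^ b₁) :
    σ₁ ^ 2 = σ₂ ^ 2 ∧ H₁ = H₂ :=
  power_law_identifiability_general α β ω η' σ₁ σ₂ H₁ H₂ a₁ b₁ hα hαβ hω hη hσ₂ hsub φ hφcont hφα
    hφne hI
end
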